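/- For every finite tree T rooted at a vertex r and every q∈(0,1), the spectral gap of the East-on-tree model on T (constraints c̃_x(ω)=1 iff x=r or ω_y=0 where y is the ancestor of x) satisfies gap(T,r,East) ≥ gap(ℤ,East). -/

import Mathlib

open scoped Classical BigOperators

noncomputable section

/-- Indicator of a proposition. -/
def ind (P : Prop) : ℝ := if P then 1 else 0

variable {ι : Type*} [DecidableEq ι]

/-- Extend a configuration defined on the finite set `S` by `true` (occupied) elsewhere. -/
def extCfg (S : Finset ι) (σ : {x // x ∈ S} → Bool) : ι → Bool :=
  fun x => if h : x ∈ S then σ ⟨x, h⟩ else true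

/-- Product Bernoulli weight of a local configuration: each site is empty (`false`)
with probability `q` and occupied (`true`) with probability `1 - q`. -/
def cylWeight (q : ℝ) (S : Finset ι) (σ : {x // x ∈ S} → Bool) : ℝ :=
  ∏ x : {x // x ∈ S}, (if σ x then 1 - q else q)

/-- Expectation (under the Bernoulli(1-q) product measure) of a function depending
only on the coordinates in `S`. -/
def cylExp (q : ℝ) (S : Finset ι) (f : (ι → Bool) → ℝ) : ℝ :=
  ∑ σ : {x // x ∈ S} → Bool, cylWeight q S σ * f (extCfg S σ)

/-- `f` depends only on the coordinates in `S`. -/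
def DependsOnCoords (f : (ι → Bool) → ℝ) (S : Finset ι) : Prop :=
  ∀ ω ω' : ι → Bool, (∀ x ∈ S, ω x = ω' x) → f ω = f ω'

/-- The local variance `Var_x f (ω) = p q (f(ω^{x←1}) - f(ω^{x←0}))²`, `p = 1 - q`. -/
def varAt (q : ℝ) (f : (ι → Bool) → ℝ) (x : ι) (ω : ι → Bool) : ℝ :=
  (1 - q) * q * (f (Function.update ω x true) - f (Function.update ω x false)) ^ 2

/-- Variance of a function depending only on the coordinates in `S`. -/
def cylVar (q : ℝ) (S : Finset ι) (f : (ι → Bool) → ℝ) : ℝ :=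
  cylExp q S (fun ω => (f ω) ^ 2) - (cylExp q S f) ^ 2

/-- Dirichlet form `D(f) = Σ_x μ(c_x · Var_x f)` of a function depending only on the
coordinates in `S`, for constraints `c` such that `c x` depends only on the coordinates
in `supp x`. -/
def dirichlet (q : ℝ) (c : ι → (ι → Bool) → Prop) (supp : ι → Finset ι)
    (S : Finset ι) (f : (ι → Bool) → ℝ) : ℝ :=
  ∑' x : ι, cylExp q (insert x (S ∪ supp x)) (fun ω => ind (c x ω) * varAt q f x ω)

/-- The spectral gap of the kinetically constrained model with constraints `c`
(the constraint at `x` depending only on the coordinates in `supp x`):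
the infimum of `D(f)/Var(f)` over nonconstant functions depending on finitely many
coordinates. -/
def kcmGap (q : ℝ) (c : ι → (ι → Bool) → Prop) (supp : ι → Finset ι) : ℝ :=
  sInf { γ : ℝ | ∃ (f : (ι → Bool) → ℝ) (S : Finset ι),
    DependsOnCoords f S ∧ (∃ ω ω', f ω ≠ f ω') ∧
    γ = dirichlet q c supp S f / cylVar q S f }

/-- The spectral gap of the East model on `ℤ` at parameter `q`. -/
def eastGap (q : ℝ) : ℝ :=
  kcmGap q (fun (x : ℤ) ω => ω (x + 1) = false) (fun x => {x + 1})

variable {V : Type*} [Fintype V] [DecidableEq V]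

/-- Expectation under the product Bernoulli measure on `{0,1}^V` (a site is empty,
i.e. `false`, with probability `q`). -/
def finExp (q : ℝ) (f : (V → Bool) → ℝ) : ℝ :=
  ∑ ω : V → Bool, (∏ x : V, if ω x then 1 - q else q) * f ω

/-- Variance under the product Bernoulli measure. -/
def finVar (q : ℝ) (f : (V → Bool) → ℝ) : ℝ :=
  finExp q (fun ω => (f ω) ^ 2) - (finExp q f) ^ 2

/-- Dirichlet form `D(f) = Σ_{x ∈ V} μ(c_x · Var_x f)`. -/
def finDir (q : ℝ) (c : V → (V → Bool) → Prop) (f : (V → Bool) → ℝ) : ℝ :=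
  ∑ x : V, finExp q (fun ω => ind (c x ω) * varAt q f x ω)

/-- Spectral gap of a finite-volume kinetically constrained model. -/
def finGap (q : ℝ) (c : V → (V → Bool) → Prop) : ℝ :=
  sInf { γ : ℝ | ∃ f : (V → Bool) → ℝ, (∃ ω ω', f ω ≠ f ω') ∧ γ = finDir q c f / finVar q f }

end

/-!
Induction over parent-closed sets of vertices `U`, proving for each the Poincaré inequality with
constant `gap(ℤ, East)` for the dynamics on `U` with the other sites frozen.
If no vertex of `U` has two children, `U` is a path, and `x ↦ -depth x` carries it into `ℤ`
so that the East constraint at `-depth x` reads the parent of `x`; at the root the East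
constraint only makes the Dirichlet term smaller.
Otherwise two siblings have disjoint sets of descendants `P` and `Q`. Write
`f = E_P f + (f - E_P f)`, where `E_P` averages out the sites of `P`: the law of total variance
splits `Var f`, the inequality on `U \ P` controls the variance of `E_P f`, which does not see
`P`, and the one on `U \ Q ⊇ P` controls the rest, which has mean zero given the sites outside
`P`. No constraint outside `P` reads a site of `P`, so the Dirichlet forms of the two pieces
add up to at most that of `f`.
-/

noncomputable section

section CondAvg

variable {ι : Type*}

def IgnoresCoords {β : Type*} (f : (ι → Bool) → β) (A : Finset ι) : Prop :=
  ∀ ω ω' : ι → Bool, (∀ x ∉ A, ω x = ω' x) → f ω = f ω'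

variable {q : ℝ} {A B : Finset ι} {f g : (ι → Bool) → ℝ}

theorem IgnoresCoords.comp {β γ : Type*} {f : (ι → Bool) → β} (hf : IgnoresCoords f A)
    (g : β → γ) : IgnoresCoords (g ∘ f) A :=
  fun ω ω' h => congrArg g (hf ω ω' h)

theorem cylWeight_nonneg (hq : q ∈ Set.Icc 0 1) (τ : {x // x ∈ A} → Bool) :
    0 ≤ cylWeight q A τ :=
  Finset.prod_nonneg fun x _ => by split <;> linarith [hq.1, hq.2]

theorem cylWeight_pos (hq : q ∈ Set.Ioo 0 1) (τ : {x // x ∈ A} → Bool) :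
    0 < cylWeight q A τ :=
  Finset.prod_pos fun x _ => by split <;> linarith [hq.1, hq.2]

variable [DecidableEq ι]

def patch (A : Finset ι) (τ : {x // x ∈ A} → Bool) (ω : ι → Bool) : ι → Bool :=
  fun x => if h : x ∈ A then τ ⟨x, h⟩ else ω x

/-- Conditional expectation of `f` given the coordinates outside `A`. -/
def condAvg (q : ℝ) (A : Finset ι) (f : (ι → Bool) → ℝ) (ω : ι → Bool) : ℝ :=
  ∑ τ : {x // x ∈ A} → Bool, cylWeight q A τ * f (patch A τ ω)

def condVar (q : ℝ) (A : Finset ι) (f : (ι → Bool) → ℝ) (ω : ι → Bool) : ℝ :=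
  condAvg q A (fun ω' => f ω' ^ 2) ω - condAvg q A f ω ^ 2

theorem sum_cylWeight (q : ℝ) (A : Finset ι) : ∑ τ, cylWeight q A τ = 1 := by
  simp only [cylWeight]
  rw [← Fintype.prod_sum (fun (_ : {x // x ∈ A}) (b : Bool) => if b then 1 - q else q)]
  simp

theorem IgnoresCoords.apply_patch {β : Type*} {f : (ι → Bool) → β} (hf : IgnoresCoords f A)
    (τ : {x // x ∈ A} → Bool) (ω : ι → Bool) : f (patch A τ ω) = f ω :=
  hf _ _ fun x hx => by simp [patch, hx]

theorem IgnoresCoords.apply_update {β : Type*} {f : (ι → Bool) → β} (hf : IgnoresCoords f A)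
    {x : ι} (hx : x ∈ A) (ω : ι → Bool) (b : Bool) : f (Function.update ω x b) = f ω :=
  hf _ _ fun _ hy => Function.update_of_ne (ne_of_mem_of_not_mem hx hy).symm b ω

theorem condAvg_congr {ω : ι → Bool} (h : ∀ τ, f (patch A τ ω) = g (patch A τ ω)) :
    condAvg q A f ω = condAvg q A g ω :=
  Finset.sum_congr rfl fun τ _ => by rw [h τ]

theorem condAvg_const (q : ℝ) (A : Finset ι) (c : ℝ) (ω : ι → Bool) :
    condAvg q A (fun _ => c) ω = c := by
  rw [condAvg, ← Finset.sum_mul, sum_cylWeight, one_mul]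

theorem condAvg_add (f g : (ι → Bool) → ℝ) (ω : ι → Bool) :
    condAvg q A (fun ω' => f ω' + g ω') ω = condAvg q A f ω + condAvg q A g ω := by
  simp only [condAvg, mul_add, Finset.sum_add_distrib]

theorem condAvg_sub (f g : (ι → Bool) → ℝ) (ω : ι → Bool) :
    condAvg q A (fun ω' => f ω' - g ω') ω = condAvg q A f ω - condAvg q A g ω := by
  simp only [condAvg, mul_sub, Finset.sum_sub_distrib]

theorem condAvg_const_mul (c : ℝ) (f : (ι → Bool) → ℝ) (ω : ι → Bool) :
    condAvg q A (fun ω' => c * f ω') ω = c * condAvg q A f ω := by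
  simp only [condAvg, Finset.mul_sum]
  exact Finset.sum_congr rfl fun _ _ => by ring

theorem condAvg_sum {β : Type*} (s : Finset β) (F : β → (ι → Bool) → ℝ) (ω : ι → Bool) :
    condAvg q A (fun ω' => ∑ b ∈ s, F b ω') ω = ∑ b ∈ s, condAvg q A (F b) ω := by
  simp only [condAvg, Finset.mul_sum]
  exact Finset.sum_comm

theorem condAvg_mono (hq : q ∈ Set.Icc 0 1) (h : ∀ ω, f ω ≤ g ω) (ω : ι → Bool) :
    condAvg q A f ω ≤ condAvg q A g ω :=
  Finset.sum_le_sum fun τ _ => mul_le_mul_of_nonneg_left (h _) (cylWeight_nonneg hq τ)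

theorem condAvg_nonneg (hq : q ∈ Set.Icc 0 1) (h : ∀ ω, 0 ≤ f ω) (ω : ι → Bool) :
    0 ≤ condAvg q A f ω :=
  Finset.sum_nonneg fun τ _ => mul_nonneg (cylWeight_nonneg hq τ) (h _)

theorem ignoresCoords_condAvg (q : ℝ) (A : Finset ι) (f : (ι → Bool) → ℝ) :
    IgnoresCoords (condAvg q A f) A := by
  intro ω ω' h
  refine Finset.sum_congr rfl fun τ _ => congrArg _ (congrArg f (funext fun x => ?_))
  by_cases hx : x ∈ A <;> simp [patch, hx, h]

theorem IgnoresCoords.condAvg (hf : IgnoresCoords f A) :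
    IgnoresCoords (condAvg q B f) A := by
  intro ω ω' h
  refine Finset.sum_congr rfl fun τ _ => congrArg _ (hf _ _ fun x hx => ?_)
  by_cases hxB : x ∈ B <;> simp [patch, hxB, h x hx]

theorem condAvg_of_ignoresCoords (hf : IgnoresCoords f A) : condAvg q A f = f := by
  funext ω
  simp only [condAvg, hf.apply_patch, ← Finset.sum_mul, sum_cylWeight, one_mul]

theorem condAvg_mul_of_ignoresCoords (hg : IgnoresCoords g A) (f : (ι → Bool) → ℝ)
    (ω : ι → Bool) : condAvg q A (fun ω' => g ω' * f ω') ω = g ω * condAvg q A f ω := by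
  simp only [condAvg, hg.apply_patch, Finset.mul_sum]
  exact Finset.sum_congr rfl fun _ _ => by ring

theorem patch_union (hAB : Disjoint A B) (τ : {x // x ∈ A} → Bool)
    (σ : {x // x ∈ B} → Bool) (ω : ι → Bool) :
    patch (A ∪ B) (Equiv.piFinsetUnion (fun _ => Bool) hAB (τ, σ)) ω =
      patch A τ (patch B σ ω) := by
  funext x
  by_cases hA : x ∈ A
  · simp [patch, hA, Equiv.piFinsetUnion_left _ hAB hA]
  by_cases hB : x ∈ B
  · simp [patch, hA, hB, Equiv.piFinsetUnion_right _ hAB hB]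
  · simp [patch, hA, hB]

theorem cylWeight_union (hAB : Disjoint A B) (τ : {x // x ∈ A} → Bool)
    (σ : {x // x ∈ B} → Bool) :
    cylWeight q (A ∪ B) (Equiv.piFinsetUnion (fun _ => Bool) hAB (τ, σ)) =
      cylWeight q A τ * cylWeight q B σ := by
  rw [cylWeight, ← Fintype.prod_equiv (Equiv.Finset.union A B hAB) _ _ fun _ => rfl,
    Fintype.prod_sum_type]
  congr 1 <;> refine Fintype.prod_congr _ _ fun x => ?_
  · rw [Equiv.Finset.union_inl, Equiv.piFinsetUnion_left _ hAB x.2]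
  · rw [Equiv.Finset.union_inr, Equiv.piFinsetUnion_right _ hAB x.2]

theorem condAvg_union (hAB : Disjoint A B) (f : (ι → Bool) → ℝ) :
    condAvg q (A ∪ B) f = condAvg q B (condAvg q A f) := by
  funext ω
  rw [condAvg, ← (Equiv.piFinsetUnion (fun _ => Bool) hAB).sum_comp, Fintype.sum_prod_type,
    Finset.sum_comm]
  simp only [cylWeight_union, patch_union, condAvg, Finset.mul_sum]
  exact Finset.sum_congr rfl fun _ _ => Finset.sum_congr rfl fun _ _ => by ring

theorem condAvg_condAvg_of_subset (hAB : A ⊆ B) (f : (ι → Bool) → ℝ) :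
    condAvg q B (condAvg q A f) = condAvg q B f := by
  rw [← Finset.union_sdiff_of_subset hAB, condAvg_union Finset.disjoint_sdiff,
    condAvg_union Finset.disjoint_sdiff, condAvg_of_ignoresCoords (ignoresCoords_condAvg q A f)]

theorem condAvg_univ {V : Type*} [Fintype V] [DecidableEq V] (q : ℝ) (F : (V → Bool) → ℝ)
    (ω : V → Bool) : condAvg q Finset.univ F ω = finExp q F := by
  let e := Equiv.subtypeUnivEquiv (α := V) Finset.mem_univ
  refine Fintype.sum_equiv (e.arrowCongr (Equiv.refl Bool)) _ _ fun τ => ?_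
  congr 1
  · exact Fintype.prod_equiv e _ _ fun _ => rfl
  · exact congrArg F (funext fun v => by simp [patch, e])

end CondAvg

theorem ind_nonneg (P : Prop) : 0 ≤ ind P := by
  unfold ind; split <;> norm_num

theorem ind_mono {P Q : Prop} (h : P → Q) : ind P ≤ ind Q := by
  unfold ind; split_ifs <;> simp_all

section Poincare

variable {ι : Type*} [DecidableEq ι] {q γ : ℝ} {A B T U P Q : Finset ι} {f g : (ι → Bool) → ℝ}

theorem condVar_eq_condAvg_sq_sub (q : ℝ) (A : Finset ι) (f : (ι → Bool) → ℝ) (ω : ι → Bool) :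
    condVar q A f ω = condAvg q A (fun ω' => (f ω' - condAvg q A f ω') ^ 2) ω := by
  set m := condAvg q A f ω
  rw [condAvg_congr (g := fun ω' => f ω' ^ 2 + ((-2 * m) * f ω' + m ^ 2)) fun τ => by
    simp only [(ignoresCoords_condAvg q A f).apply_patch, m]; ring]
  rw [condAvg_add, condAvg_add, condAvg_const_mul, condAvg_const, condVar]
  ring

theorem condVar_nonneg (hq : q ∈ Set.Icc 0 1) (f : (ι → Bool) → ℝ) (ω : ι → Bool) :
    0 ≤ condVar q A f ω := by
  rw [condVar_eq_condAvg_sq_sub]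
  exact condAvg_nonneg hq (fun _ => sq_nonneg _) ω

theorem condVar_pos (hq : q ∈ Set.Ioo 0 1) {ω : ι → Bool}
    (hf : ∃ τ τ', f (patch A τ ω) ≠ f (patch A τ' ω)) : 0 < condVar q A f ω := by
  obtain ⟨τ, τ', hne⟩ := hf
  have hm := (ignoresCoords_condAvg q A f).apply_patch (ω := ω)
  obtain ⟨τ₀, h₀⟩ : ∃ τ₀, f (patch A τ₀ ω) - condAvg q A f (patch A τ₀ ω) ≠ 0 := by
    by_contra! h
    exact hne (by linarith [h τ, h τ', hm τ, hm τ'])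
  rw [condVar_eq_condAvg_sq_sub]
  exact Finset.sum_pos' (fun τ _ => mul_nonneg (cylWeight_nonneg (Set.Ioo_subset_Icc_self hq) τ)
    (sq_nonneg _)) ⟨τ₀, Finset.mem_univ _, mul_pos (cylWeight_pos hq τ₀) (by positivity)⟩

/-- The law of total variance. -/
theorem condVar_eq_condVar_condAvg_add (hPU : P ⊆ U) (f : (ι → Bool) → ℝ) (ω : ι → Bool) :
    condVar q U f ω = condVar q U (condAvg q P f) ω +
      condAvg q U (fun ω' => (f ω' - condAvg q P f ω') ^ 2) ω := by
  have hP : ∀ ω', condAvg q P (fun ω'' => f ω'' ^ 2) ω' = condAvg q P f ω' ^ 2 +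
      condAvg q P (fun ω'' => (f ω'' - condAvg q P f ω'') ^ 2) ω' := fun ω' => by
    rw [← condVar_eq_condAvg_sq_sub, condVar]; ring
  have hsq : condAvg q U (fun ω' => f ω' ^ 2) ω = condAvg q U (fun ω' => condAvg q P f ω' ^ 2) ω +
      condAvg q U (fun ω' => (f ω' - condAvg q P f ω') ^ 2) ω := by
    rw [← condAvg_condAvg_of_subset hPU, funext hP, condAvg_add,
      condAvg_condAvg_of_subset hPU]
  rw [condVar, condVar, hsq, condAvg_condAvg_of_subset hPU]
  ring

theorem condAvg_condVar_of_ignoresCoords (hTB : Disjoint T B) (hg : IgnoresCoords g B)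
    (ω : ι → Bool) : condAvg q B (condVar q T g) ω = condVar q (T ∪ B) g ω := by
  have hm : IgnoresCoords (condAvg q T g) B := hg.condAvg
  have hm2 : IgnoresCoords (fun ω' => condAvg q T g ω' ^ 2) B := hm.comp (· ^ 2)
  unfold condVar
  rw [condAvg_sub, condAvg_of_ignoresCoords hm2, condAvg_union hTB, condAvg_union hTB,
    condAvg_of_ignoresCoords hm]

def grad (f : (ι → Bool) → ℝ) (x : ι) (ω : ι → Bool) : ℝ :=
  f (Function.update ω x true) - f (Function.update ω x false)

theorem varAt_eq_grad (q : ℝ) (f : (ι → Bool) → ℝ) (x : ι) (ω : ι → Bool) :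
    varAt q f x ω = (1 - q) * q * grad f x ω ^ 2 := rfl

theorem varAt_nonneg (hq : q ∈ Set.Icc 0 1) (f : (ι → Bool) → ℝ) (x : ι) (ω : ι → Bool) :
    0 ≤ varAt q f x ω :=
  mul_nonneg (mul_nonneg (by linarith [hq.2]) hq.1) (sq_nonneg _)

theorem patch_update_of_notMem {x : ι} (hx : x ∉ A) (τ : {x // x ∈ A} → Bool) (ω : ι → Bool)
    (b : Bool) : patch A τ (Function.update ω x b) = Function.update (patch A τ ω) x b := by
  funext y
  by_cases hy : y ∈ A
  · simp [patch, hy, Function.update, ne_of_mem_of_not_mem hy hx]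
  · by_cases hyx : y = x
    · subst hyx; simp [patch, hy]
    · simp [patch, hy, Function.update, hyx]

theorem grad_condAvg {x : ι} (hx : x ∉ A) (f : (ι → Bool) → ℝ) (ω : ι → Bool) :
    grad (condAvg q A f) x ω = condAvg q A (grad f x) ω := by
  simp only [grad, condAvg, patch_update_of_notMem hx, ← Finset.sum_sub_distrib, mul_sub]

theorem condAvg_varAt_sub_condAvg {x : ι} (hx : x ∉ P) (f : (ι → Bool) → ℝ) (ω : ι → Bool) :
    condAvg q P (varAt q (fun ω' => f ω' - condAvg q P f ω') x) ω =
      condAvg q P (varAt q f x) ω - varAt q (condAvg q P f) x ω := by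
  have hgrad : ∀ ω', grad (fun ω' => f ω' - condAvg q P f ω') x ω' =
      grad f x ω' - condAvg q P (grad f x) ω' := fun ω' => by
    rw [← grad_condAvg hx]; simp only [grad]; ring
  have hvar := condVar_eq_condAvg_sq_sub q P (grad f x) ω
  rw [condVar] at hvar
  calc condAvg q P (varAt q (fun ω' => f ω' - condAvg q P f ω') x) ω
      = (1 - q) * q * condAvg q P (fun ω' => (grad f x ω' - condAvg q P (grad f x) ω') ^ 2) ω := by
        rw [← condAvg_const_mul]
        exact condAvg_congr fun τ => by rw [varAt_eq_grad, hgrad]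
    _ = (1 - q) * q * condAvg q P (fun ω' => grad f x ω' ^ 2) ω -
          (1 - q) * q * grad (condAvg q P f) x ω ^ 2 := by
        rw [← hvar, grad_condAvg hx]; ring
    _ = _ := by rw [← condAvg_const_mul]; rfl

variable (q) (c : ι → (ι → Bool) → Prop)

def condDirAt (A : Finset ι) (f : (ι → Bool) → ℝ) (x : ι) (ω : ι → Bool) : ℝ :=
  condAvg q A (fun ω' => ind (c x ω') * varAt q f x ω') ω

def condDir (A : Finset ι) (f : (ι → Bool) → ℝ) (ω : ι → Bool) : ℝ :=
  ∑ x ∈ A, condDirAt q c A f x ω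

def PoincareOn (γ : ℝ) (A : Finset ι) : Prop :=
  ∀ f ω, γ * condVar q A f ω ≤ condDir q c A f ω

variable {q c}

theorem condDirAt_nonneg (hq : q ∈ Set.Icc 0 1) (A : Finset ι) (f : (ι → Bool) → ℝ) (x : ι)
    (ω : ι → Bool) : 0 ≤ condDirAt q c A f x ω :=
  condAvg_nonneg hq (fun _ => mul_nonneg (ind_nonneg _) (varAt_nonneg hq f x _)) ω

theorem condDirAt_sub_condAvg_add {x : ι} (hPU : P ⊆ U) (hx : x ∉ P)
    (hc : IgnoresCoords (c x) P) (f : (ι → Bool) → ℝ) (ω : ι → Bool) :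
    condDirAt q c U (fun ω' => f ω' - condAvg q P f ω') x ω +
      condDirAt q c U (condAvg q P f) x ω = condDirAt q c U f x ω := by
  have hind : IgnoresCoords (fun ω' => ind (c x ω')) P := hc.comp ind
  have hP : ∀ ω', condAvg q P (fun ω'' => ind (c x ω'') *
      varAt q (fun ω' => f ω' - condAvg q P f ω') x ω'') ω' =
      condAvg q P (fun ω'' => ind (c x ω'') * varAt q f x ω'') ω' -
        ind (c x ω') * varAt q (condAvg q P f) x ω' := fun ω' => by
    rw [condAvg_mul_of_ignoresCoords hind, condAvg_mul_of_ignoresCoords hind,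
      condAvg_varAt_sub_condAvg hx]
    ring
  unfold condDirAt
  rw [← condAvg_condAvg_of_subset hPU, funext hP, condAvg_sub, condAvg_condAvg_of_subset hPU]
  ring

theorem condDirAt_sub_condAvg_of_mem {x : ι} (hx : x ∈ P) (f : (ι → Bool) → ℝ)
    (ω : ι → Bool) :
    condDirAt q c U (fun ω' => f ω' - condAvg q P f ω') x ω = condDirAt q c U f x ω := by
  have hvar : ∀ ω', varAt q (fun ω' => f ω' - condAvg q P f ω') x ω' = varAt q f x ω' :=
    fun ω' => by simp only [varAt, (ignoresCoords_condAvg q P f).apply_update hx]; ring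
  simp only [condDirAt, hvar]

theorem PoincareOn.condAvg_le (h : PoincareOn q c γ T) (hq : q ∈ Set.Icc 0 1)
    (hTB : Disjoint T B) (f : (ι → Bool) → ℝ) (ω : ι → Bool) :
    γ * condAvg q B (condVar q T f) ω ≤ ∑ x ∈ T, condDirAt q c (T ∪ B) f x ω := by
  calc γ * condAvg q B (condVar q T f) ω
      = condAvg q B (fun ω' => γ * condVar q T f ω') ω := (condAvg_const_mul _ _ _).symm
    _ ≤ condAvg q B (fun ω' => ∑ x ∈ T, condDirAt q c T f x ω') ω := condAvg_mono hq (h f) ω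
    _ = _ := by
      rw [condAvg_sum]
      exact Finset.sum_congr rfl fun x _ => by
        rw [condDirAt, condAvg_union hTB]; rfl

theorem condAvg_sub_condAvg_of_subset (hPT : P ⊆ T) (f : (ι → Bool) → ℝ) (ω : ι → Bool) :
    condAvg q T (fun ω' => f ω' - condAvg q P f ω') ω = 0 := by
  have hP : condAvg q P (fun ω' => f ω' - condAvg q P f ω') = fun _ => 0 := funext fun ω' => by
    rw [condAvg_sub, condAvg_of_ignoresCoords (ignoresCoords_condAvg q P f), sub_self]
  rw [← condAvg_condAvg_of_subset hPT, hP, condAvg_const]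

theorem PoincareOn.condVar_le_of_ignoresCoords (h : PoincareOn q c γ (U \ P))
    (hq : q ∈ Set.Icc 0 1) (hPU : P ⊆ U) (hg : IgnoresCoords g P) (ω : ι → Bool) :
    γ * condVar q U g ω ≤ ∑ x ∈ U \ P, condDirAt q c U g x ω := by
  have := h.condAvg_le hq Finset.sdiff_disjoint g ω
  rwa [condAvg_condVar_of_ignoresCoords Finset.sdiff_disjoint hg,
    Finset.sdiff_union_of_subset hPU] at this

theorem PoincareOn.condAvg_sq_le_of_condAvg_eq_zero (h : PoincareOn q c γ (U \ Q))
    (hq : q ∈ Set.Icc 0 1) (hQU : Q ⊆ U) (hf : ∀ ω', condAvg q (U \ Q) f ω' = 0)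
    (ω : ι → Bool) :
    γ * condAvg q U (fun ω' => f ω' ^ 2) ω ≤ ∑ x ∈ U \ Q, condDirAt q c U f x ω := by
  have hvar : condVar q (U \ Q) f = condAvg q (U \ Q) (fun ω' => f ω' ^ 2) :=
    funext fun ω' => by rw [condVar, hf]; ring
  have := h.condAvg_le hq Finset.sdiff_disjoint f ω
  rwa [hvar, ← condAvg_union Finset.sdiff_disjoint, Finset.sdiff_union_of_subset hQU] at this

theorem PoincareOn.of_split (hq : q ∈ Set.Icc 0 1) (hPU : P ⊆ U) (hQU : Q ⊆ U)
    (hPQ : Disjoint P Q) (hc : ∀ x ∈ U \ P, IgnoresCoords (c x) P)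
    (hP : PoincareOn q c γ (U \ P)) (hQ : PoincareOn q c γ (U \ Q)) :
    PoincareOn q c γ U := by
  intro f ω
  set g := condAvg q P f
  set h := fun ω' => f ω' - g ω'
  have hg : γ * condVar q U g ω ≤ ∑ x ∈ U \ P, condDirAt q c U g x ω :=
    hP.condVar_le_of_ignoresCoords hq hPU (ignoresCoords_condAvg q P f) ω
  have hh : γ * condAvg q U (fun ω' => h ω' ^ 2) ω ≤ ∑ x ∈ U \ Q, condDirAt q c U h x ω :=
    hQ.condAvg_sq_le_of_condAvg_eq_zero hq hQU
      (condAvg_sub_condAvg_of_subset (Finset.subset_sdiff.2 ⟨hPU, hPQ⟩) f) ω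
  have hdir : ∑ x ∈ U \ P, condDirAt q c U g x ω + ∑ x ∈ U \ Q, condDirAt q c U h x ω ≤
      condDir q c U f ω := by
    calc _ ≤ ∑ x ∈ U \ P, condDirAt q c U g x ω + ∑ x ∈ U, condDirAt q c U h x ω := by
          gcongr
          · exact fun x _ _ => condDirAt_nonneg hq U h x ω
          · exact Finset.sdiff_subset
      _ = ∑ x ∈ U \ P, (condDirAt q c U h x ω + condDirAt q c U g x ω) +
          ∑ x ∈ P, condDirAt q c U h x ω := by
          rw [← Finset.sum_sdiff hPU, Finset.sum_add_distrib]; ring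
      _ = ∑ x ∈ U \ P, condDirAt q c U f x ω + ∑ x ∈ P, condDirAt q c U f x ω := by
          congr 1 <;> refine Finset.sum_congr rfl fun x hx => ?_
          · exact condDirAt_sub_condAvg_add hPU (Finset.mem_sdiff.1 hx).2 (hc x hx) f ω
          · exact condDirAt_sub_condAvg_of_mem hx f ω
      _ = condDir q c U f ω := Finset.sum_sdiff hPU
  calc γ * condVar q U f ω = γ * condVar q U g ω + γ * condAvg q U (fun ω' => h ω' ^ 2) ω := by
        rw [condVar_eq_condVar_condAvg_add hPU]; ring
    _ ≤ condDir q c U f ω := (add_le_add hg hh).trans hdir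

end Poincare

section Transfer

variable {ι κ : Type*} [DecidableEq ι] [DecidableEq κ] {q : ℝ}

theorem cylExp_eq_condAvg (q : ℝ) (S : Finset ι) (f : (ι → Bool) → ℝ) :
    cylExp q S f = condAvg q S f (fun _ => true) := rfl

theorem cylVar_eq_condVar (q : ℝ) (S : Finset ι) (f : (ι → Bool) → ℝ) :
    cylVar q S f = condVar q S f (fun _ => true) := rfl

theorem kcmGap_mul_cylVar_le (hq : q ∈ Set.Icc 0 1) (c : ι → (ι → Bool) → Prop)
    (supp : ι → Finset ι) {S : Finset ι} {f : (ι → Bool) → ℝ} (hf : DependsOnCoords f S) :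
    kcmGap q c supp * cylVar q S f ≤ dirichlet q c supp S f := by
  have hD : ∀ (S' : Finset ι) (f' : (ι → Bool) → ℝ), 0 ≤ dirichlet q c supp S' f' :=
    fun S' f' => tsum_nonneg fun x => by
      rw [cylExp_eq_condAvg]
      exact condAvg_nonneg hq (fun _ => mul_nonneg (ind_nonneg _) (varAt_nonneg hq f' x _)) _
  have hV : ∀ (S' : Finset ι) (f' : (ι → Bool) → ℝ), 0 ≤ cylVar q S' f' :=
    fun S' f' => condVar_nonneg hq f' _
  rcases (hV S f).eq_or_lt with h0 | hpos
  · rw [← h0, mul_zero]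
    exact hD S f
  have hnc : ∃ ω ω', f ω ≠ f ω' := by
    by_contra! hconst
    have hf0 : f = fun _ => f (fun _ => true) := funext fun ω => hconst ω _
    rw [hf0, cylVar_eq_condVar, condVar, condAvg_const, condAvg_const, sub_self] at hpos
    exact lt_irrefl 0 hpos
  have hbdd : BddBelow {γ : ℝ | ∃ (f : (ι → Bool) → ℝ) (S : Finset ι), DependsOnCoords f S ∧
      (∃ ω ω', f ω ≠ f ω') ∧ γ = dirichlet q c supp S f / cylVar q S f} :=
    ⟨0, by rintro _ ⟨f', S', -, -, rfl⟩; exact div_nonneg (hD _ _) (hV _ _)⟩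
  exact (le_div_iff₀ hpos).1 (csInf_le hbdd ⟨f, S, hf, hnc, rfl⟩)

def pullCfg (φ : ι → κ) (U : Finset ι) (ω : ι → Bool) (ω' : κ → Bool) : ι → Bool :=
  fun x => if x ∈ U then ω' (φ x) else ω x

variable {φ : ι → κ} {U : Finset ι} {ω : ι → Bool}

theorem dependsOnCoords_comp_pullCfg (F : (ι → Bool) → ℝ) :
    DependsOnCoords (fun ω' => F (pullCfg φ U ω ω')) (U.image φ) := fun ω₁ ω₂ h =>
  congrArg F <| funext fun x => by
    by_cases hx : x ∈ U
    · simp [pullCfg, hx, h _ (Finset.mem_image_of_mem φ hx)]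
    · simp [pullCfg, hx]

theorem pullCfg_update (hφ : Set.InjOn φ U) {x : ι} (hx : x ∈ U) (ω' : κ → Bool) (b : Bool) :
    pullCfg φ U ω (Function.update ω' (φ x) b) = Function.update (pullCfg φ U ω ω') x b := by
  funext y
  by_cases hy : y ∈ U
  · by_cases hyx : y = x
    · subst hyx; simp [pullCfg, hy]
    · simp [pullCfg, hy, hyx, Function.update_of_ne fun h => hyx (hφ hy hx h)]
  · simp [pullCfg, hy, (ne_of_mem_of_not_mem hx hy).symm]

theorem pullCfg_update_of_notMem {z : κ} (hz : z ∉ U.image φ) (ω' : κ → Bool) (b : Bool) :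
    pullCfg φ U ω (Function.update ω' z b) = pullCfg φ U ω ω' := by
  funext y
  by_cases hy : y ∈ U
  · have hyz : φ y ≠ z := fun h => hz (h ▸ Finset.mem_image_of_mem φ hy)
    simp [pullCfg, hy, hyz]
  · simp [pullCfg, hy]

theorem condAvg_image_comp_pullCfg (hφ : Set.InjOn φ U) (F : (ι → Bool) → ℝ)
    (ω' : κ → Bool) :
    condAvg q (U.image φ) (fun ω'' => F (pullCfg φ U ω ω'')) ω' = condAvg q U F ω := by
  let e : {x // x ∈ U} ≃ {z // z ∈ U.image φ} := Equiv.ofBijective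
    (fun x => ⟨φ x, Finset.mem_image_of_mem φ x.2⟩)
    ⟨fun x y h => Subtype.ext (hφ x.2 y.2 (congrArg Subtype.val h)), fun ⟨z, hz⟩ => by
      obtain ⟨x, hx, rfl⟩ := Finset.mem_image.1 hz
      exact ⟨⟨x, hx⟩, rfl⟩⟩
  refine Fintype.sum_equiv (e.arrowCongr (Equiv.refl Bool)).symm _ _ fun σ => ?_
  congr 1
  · exact (Fintype.prod_equiv e _ _ fun _ => rfl).symm
  · refine congrArg F (funext fun x => ?_)
    by_cases hx : x ∈ U
    · simp [pullCfg, patch, hx, Finset.mem_image_of_mem φ hx]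
      rfl
    · simp [pullCfg, patch, hx]

theorem condAvg_comp_pullCfg (hφ : Set.InjOn φ U) {A : Finset κ} (hA : U.image φ ⊆ A)
    (F : (ι → Bool) → ℝ) (ω' : κ → Bool) :
    condAvg q A (fun ω'' => F (pullCfg φ U ω ω'')) ω' = condAvg q U F ω := by
  rw [← Finset.union_sdiff_of_subset hA, condAvg_union Finset.disjoint_sdiff,
    funext (condAvg_image_comp_pullCfg hφ F), condAvg_const]

theorem varAt_comp_pullCfg (hφ : Set.InjOn φ U) {x : ι} (hx : x ∈ U) (F : (ι → Bool) → ℝ)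
    (ω' : κ → Bool) :
    varAt q (fun ω'' => F (pullCfg φ U ω ω'')) (φ x) ω' = varAt q F x (pullCfg φ U ω ω') := by
  simp only [varAt, pullCfg_update hφ hx]

theorem varAt_comp_pullCfg_of_notMem {z : κ} (hz : z ∉ U.image φ) (F : (ι → Bool) → ℝ)
    (ω' : κ → Bool) : varAt q (fun ω'' => F (pullCfg φ U ω ω'')) z ω' = 0 := by
  simp only [varAt, pullCfg_update_of_notMem hz, sub_self]
  ring

end Transfer

section EastTree

variable {V : Type*} (parent : V → V) (r : V)

def eastTreeConstraint (x : V) (ω : V → Bool) : Prop :=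
  x = r ∨ ω (parent x) = false

def depth (x : V) : ℕ :=
  sInf {n | parent^[n] x = r}

def descendants (U : Finset V) (c : V) : Finset V :=
  U.filter fun x => ∃ k, parent^[k] x = c

variable {parent r}

theorem iterate_depth (hreach : ∀ x, ∃ n : ℕ, parent^[n] x = r) (x : V) :
    parent^[depth parent r x] x = r :=
  Nat.sInf_mem (hreach x)

theorem depth_eq_zero_iff (hreach : ∀ x, ∃ n : ℕ, parent^[n] x = r) {x : V} :
    depth parent r x = 0 ↔ x = r :=
  ⟨fun h => by simpa [h] using iterate_depth hreach x,
    fun h => Nat.eq_zero_of_le_zero (Nat.sInf_le (by simp [h]))⟩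

theorem depth_parent (hreach : ∀ x, ∃ n : ℕ, parent^[n] x = r) {x : V} (hx : x ≠ r) :
    depth parent r (parent x) + 1 = depth parent r x := by
  have hpos : depth parent r x ≠ 0 := mt (depth_eq_zero_iff hreach).1 hx
  have hle : depth parent r (parent x) ≤ depth parent r x - 1 := Nat.sInf_le <| by
    show parent^[depth parent r x - 1] (parent x) = r
    rw [← Function.iterate_succ_apply, Nat.succ_eq_add_one, Nat.sub_add_cancel
      (Nat.pos_of_ne_zero hpos)]
    exact iterate_depth hreach x
  have hge : depth parent r x ≤ depth parent r (parent x) + 1 :=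
    Nat.sInf_le (iterate_depth hreach (parent x))
  omega

theorem depth_iterate (hroot : parent r = r) (hreach : ∀ x, ∃ n : ℕ, parent^[n] x = r)
    (k : ℕ) (x : V) : depth parent r (parent^[k] x) = depth parent r x - k := by
  induction k generalizing x with
  | zero => rfl
  | succ k ih =>
    rw [Function.iterate_succ_apply, ih]
    by_cases hx : x = r
    · subst hx
      simp [hroot, (depth_eq_zero_iff hreach).2 rfl]
    · have := depth_parent hreach hx
      omega

theorem disjoint_descendants (hroot : parent r = r) (hreach : ∀ x, ∃ n : ℕ, parent^[n] x = r)
    (U : Finset V) {a b : V} (hab : depth parent r a = depth parent r b) (hne : a ≠ b) :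
    Disjoint (descendants parent U a) (descendants parent U b) := by
  refine Finset.disjoint_left.2 fun z hza hzb => hne ?_
  obtain ⟨-, k, rfl⟩ := Finset.mem_filter.1 hza
  obtain ⟨-, j, rfl⟩ := Finset.mem_filter.1 hzb
  rw [depth_iterate hroot hreach, depth_iterate hroot hreach] at hab
  obtain rfl | ⟨hk, hj⟩ : k = j ∨ depth parent r z ≤ k ∧ depth parent r z ≤ j := by omega
  · rfl
  · have hzk : parent^[k] z = r :=
      (depth_eq_zero_iff hreach).1 (by rw [depth_iterate hroot hreach]; omega)
    have hzj : parent^[j] z = r :=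
      (depth_eq_zero_iff hreach).1 (by rw [depth_iterate hroot hreach]; omega)
    rw [hzk, hzj]

theorem depth_injOn (hreach : ∀ x, ∃ n : ℕ, parent^[n] x = r) {U : Finset V}
    (hU : ∀ x ∈ U, parent x ∈ U)
    (hpath : ∀ a ∈ U, ∀ b ∈ U, a ≠ r → b ≠ r → parent a = parent b → a = b) :
    Set.InjOn (depth parent r) U := by
  suffices h : ∀ n, ∀ a ∈ U, ∀ b ∈ U, depth parent r a = n → depth parent r b = n → a = b from
    fun a ha b hb hab => h _ a ha b hb rfl hab.symm
  intro n
  induction n with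
  | zero =>
    intro a _ b _ ha hb
    rw [(depth_eq_zero_iff hreach).1 ha, (depth_eq_zero_iff hreach).1 hb]
  | succ n ih =>
    intro a ha b hb hda hdb
    have har : a ≠ r := fun h => by simp [(depth_eq_zero_iff hreach).2 h] at hda
    have hbr : b ≠ r := fun h => by simp [(depth_eq_zero_iff hreach).2 h] at hdb
    have hpa := depth_parent hreach har
    have hpb := depth_parent hreach hbr
    exact hpath a ha b hb har hbr (ih _ (hU a ha) _ (hU b hb) (by omega) (by omega))

variable [DecidableEq V]

theorem parent_notMem_descendants {U : Finset V} {c x : V}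
    (hx : x ∈ U \ descendants parent U c) : parent x ∉ descendants parent U c := by
  intro hp
  obtain ⟨hxU, hxc⟩ := Finset.mem_sdiff.1 hx
  obtain ⟨-, k, hk⟩ := Finset.mem_filter.1 hp
  exact hxc (Finset.mem_filter.2 ⟨hxU, k + 1, hk⟩)

variable {q : ℝ}

theorem poincareOn_eastTree_of_injOn (hq : q ∈ Set.Icc 0 1) {U : Finset V} {φ : V → ℤ}
    (hφ : Set.InjOn φ U) (hstep : ∀ x ∈ U, x ≠ r → parent x ∈ U ∧ φ (parent x) = φ x + 1) :
    PoincareOn q (eastTreeConstraint parent r) (eastGap q) U := by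
  intro f ω
  set S := U.image φ
  set G := fun ω' => f (pullCfg φ U ω ω')
  have hvar : cylVar q S G = condVar q U f ω := by
    rw [cylVar_eq_condVar, condVar, condVar, condAvg_image_comp_pullCfg hφ,
      condAvg_image_comp_pullCfg hφ (fun ω'' => f ω'' ^ 2)]
  have hzero : ∀ z ∉ S, cylExp q (insert z (S ∪ {z + 1}))
      (fun ω' => ind (ω' (z + 1) = false) * varAt q G z ω') = 0 := fun z hz => by
    simp [cylExp, varAt_comp_pullCfg_of_notMem hz, G]
  have hterm : ∀ x ∈ U, cylExp q (insert (φ x) (S ∪ {φ x + 1}))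
      (fun ω' => ind (ω' (φ x + 1) = false) * varAt q G (φ x) ω') ≤
      condDirAt q (eastTreeConstraint parent r) U f x ω := fun x hx => by
    rw [condDirAt, ← condAvg_comp_pullCfg hφ (A := insert (φ x) (S ∪ {φ x + 1}))
      (Finset.subset_union_left.trans (Finset.subset_insert _ _)) _ (fun _ => true),
      cylExp_eq_condAvg]
    refine condAvg_mono hq (fun ω' => ?_) _
    rw [varAt_comp_pullCfg hφ hx]
    refine mul_le_mul_of_nonneg_right (ind_mono fun h => ?_) (varAt_nonneg hq _ _ _)
    by_cases hxr : x = r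
    · exact Or.inl hxr
    · obtain ⟨hpU, hpφ⟩ := hstep x hx hxr
      exact Or.inr (by simp [pullCfg, hpU, hpφ, h])
  calc eastGap q * condVar q U f ω = eastGap q * cylVar q S G := by rw [hvar]
    _ ≤ dirichlet q (fun (z : ℤ) ω' => ω' (z + 1) = false) (fun z => {z + 1}) S G :=
        kcmGap_mul_cylVar_le hq _ _ (dependsOnCoords_comp_pullCfg f)
    _ = ∑ z ∈ S, cylExp q (insert z (S ∪ {z + 1}))
          (fun ω' => ind (ω' (z + 1) = false) * varAt q G z ω') := tsum_eq_sum hzero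
    _ = ∑ x ∈ U, cylExp q (insert (φ x) (S ∪ {φ x + 1}))
          (fun ω' => ind (ω' (φ x + 1) = false) * varAt q G (φ x) ω') := Finset.sum_image hφ
    _ ≤ condDir q (eastTreeConstraint parent r) U f ω := Finset.sum_le_sum hterm

theorem poincareOn_eastTree (hroot : parent r = r) (hreach : ∀ x, ∃ n : ℕ, parent^[n] x = r)
    (hq : q ∈ Set.Icc 0 1) (U : Finset V) (hU : ∀ x ∈ U, parent x ∈ U) :
    PoincareOn q (eastTreeConstraint parent r) (eastGap q) U := by
  induction U using Finset.strongInduction with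
  | H U ih =>
  by_cases hpath : ∀ a ∈ U, ∀ b ∈ U, a ≠ r → b ≠ r → parent a = parent b → a = b
  · refine poincareOn_eastTree_of_injOn hq (φ := fun x => -(depth parent r x : ℤ))
      (fun a ha b hb h => depth_injOn hreach hU hpath ha hb (by simpa using h))
      fun x hx hxr => ⟨hU x hx, ?_⟩
    have := depth_parent hreach hxr
    omega
  push Not at hpath
  obtain ⟨a, ha, b, hb, har, hbr, hpar, hne⟩ := hpath
  have hclosed : ∀ c, ∀ x ∈ U \ descendants parent U c, parent x ∈ U \ descendants parent U c :=
    fun c x hx => Finset.mem_sdiff.2 ⟨hU x (Finset.mem_sdiff.1 hx).1, parent_notMem_descendants hx⟩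
  have hsmaller : ∀ c ∈ U, U \ descendants parent U c ⊂ U := fun c hc =>
    Finset.sdiff_ssubset (Finset.filter_subset _ _) ⟨c, Finset.mem_filter.2 ⟨hc, 0, rfl⟩⟩
  have hdepth : depth parent r a = depth parent r b := by
    have := depth_parent hreach har
    have := depth_parent hreach hbr
    rw [hpar] at *
    omega
  refine PoincareOn.of_split hq (Finset.filter_subset _ _) (Finset.filter_subset _ _)
    (disjoint_descendants hroot hreach U hdepth hne) (fun x hx ω ω' h => ?_)
    (ih _ (hsmaller a ha) (hclosed a)) (ih _ (hsmaller b hb) (hclosed b))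
  simp only [eastTreeConstraint, h _ (parent_notMem_descendants hx)]

end EastTree

end

open scoped Classical in
/-- For every finite tree rooted at `r` (encoded by its parent map) and
every `q ∈ (0,1)`, the spectral gap of the East-on-tree model (a vertex may be updated
iff it is the root or its ancestor carries a `0`) is at least the spectral gap of the
East model on `ℤ`. -/
theorem tree_east_gap_ge_east_gap {V : Type*} [Fintype V] [DecidableEq V]
    (parent : V → V) (r : V) (hroot : parent r = r)
    (hreach : ∀ x, ∃ n : ℕ, parent^[n] x = r)
    (q : ℝ) (hq : q ∈ Set.Ioo (0 : ℝ) 1) :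
    eastGap q ≤ finGap q (fun (x : V) ω => x = r ∨ ω (parent x) = false) := by
  have hpoinc := poincareOn_eastTree hroot hreach (Set.Ioo_subset_Icc_self hq) Finset.univ
    fun x _ => Finset.mem_univ (parent x)
  refine le_csInf ⟨_, fun ω => ind (ω r = true), ⟨fun _ => true, fun _ => false, by simp [ind]⟩,
    rfl⟩ ?_
  rintro _ ⟨f, ⟨ω₁, ω₂, hne⟩, rfl⟩
  let ω : V → Bool := fun _ => true
  have hpatch : ∀ ω' : V → Bool, patch Finset.univ (fun v => ω' v) ω = ω' :=
    fun ω' => funext fun v => by simp [patch]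
  have hvar : finVar q f = condVar q Finset.univ f ω := by
    rw [condVar, condAvg_univ, condAvg_univ, finVar]
  have hdir : finDir q (fun (x : V) ω => x = r ∨ ω (parent x) = false) f =
      condDir q (eastTreeConstraint parent r) Finset.univ f ω := by
    simp only [condDir, condDirAt, condAvg_univ, finDir, eastTreeConstraint]
  have hpos : 0 < condVar q Finset.univ f ω :=
    condVar_pos hq ⟨fun v => ω₁ v, fun v => ω₂ v, by rwa [hpatch, hpatch]⟩
  rw [hvar, hdir, le_div_iff₀ hpos]
  exact hpoinc f ω
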